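/- Let w be a binary word and α > 2. If μ^s(w) contains a factor with period p and exponent (length/period) κ ≥ α, then p is divisible by 2^s and w contains a factor with period p/2^s and exponent at least κ (in particular a κ-power up to rounding of lengths). -/

import Mathlib

/-- Thue–Morse morphism: 0 ↦ 01, 1 ↦ 10 (false = 0, true = 1). -/
def mu : List Bool → List Bool :=
  fun w => w.flatMap (fun b => if b then [true, false] else [false, true])

/-- `w` has period `p`: `w[i] = w[i+p]` whenever both defined. -/
def HasPeriod (w : List Bool) (p : ℕ) : Prop :=
  ∀ i, i + p < w.length → w[i]? = w[i + p]?

/-- `w` is α-power-free: no factor `u` has a period `p` with `|u|/p ≥ α`. -/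
def PowerFree (α : ℝ) (w : List Bool) : Prop :=
  ∀ u p, u <:+: w → 0 < p → HasPeriod u p → (u.length : ℝ) / p < α

/-- `𝓛`: factors of images of `mu`. -/
def InL (w : List Bool) : Prop := ∃ x, w <:+: mu x
/-! In `μ w` the letters at positions `2k` and `2k + 1` are `w[k]` and its complement.
An odd period `p` of a factor longer than `2p` is impossible: shifting by `p` moves block
boundaries to block interiors, so the factor alternates on a stretch longer than `p`, against
the period. An even period `2r` compares positions `m` and `m + 2r`, i.e. the letters `w[m/2]` and
`w[m/2 + r]`, so the letters of `w` underlying the factor have period `r` and are at least half as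
many. Each de-substitution divides the period by 2 and the length by at most 2, so the exponent
never drops. -/

theorem mu_cons (b : Bool) (w : List Bool) : mu (b :: w) = b :: (!b) :: mu w := by
  cases b <;> rfl

theorem mu_length (w : List Bool) : (mu w).length = 2 * w.length := by
  induction w with
  | nil => rfl
  | cons b w ih => simp only [mu_cons, List.length_cons, ih]; ring

theorem getElem?_mu_two_mul (w : List Bool) (k : ℕ) : (mu w)[2 * k]? = w[k]? := by
  induction w generalizing k with
  | nil => rfl
  | cons b w ih => cases k <;> simp [mu_cons, Nat.mul_succ, ih]

theorem getElem?_mu_two_mul_add_one (w : List Bool) (k : ℕ) :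
    (mu w)[2 * k + 1]? = w[k]?.map not := by
  induction w generalizing k with
  | nil => rfl
  | cons b w ih => cases k <;> simp [mu_cons, Nat.mul_succ, ih]

theorem getElem?_mu_succ_of_even (w : List Bool) {m : ℕ} (hm : Even m) :
    (mu w)[m + 1]? = (mu w)[m]?.map not := by
  obtain ⟨k, rfl⟩ := hm
  rw [← two_mul, getElem?_mu_two_mul, getElem?_mu_two_mul_add_one]

theorem getElem?_mu_eq_getElem?_add_two_mul_iff (w : List Bool) (m r : ℕ) :
    (mu w)[m]? = (mu w)[m + 2 * r]? ↔ w[m / 2]? = w[m / 2 + r]? := by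
  obtain ⟨k, rfl | rfl⟩ := Nat.even_or_odd' m
  · rw [← mul_add, getElem?_mu_two_mul, getElem?_mu_two_mul, Nat.mul_div_cancel_left _ two_pos]
  · rw [show (2 * k + 1) / 2 = k by omega, show 2 * k + 1 + 2 * r = 2 * (k + r) + 1 by ring,
      getElem?_mu_two_mul_add_one, getElem?_mu_two_mul_add_one,
      (Option.map_injective Bool.not_injective).eq_iff]

theorem hasPeriod_iff_of_append_eq {x u y t : List Bool} {p : ℕ} (h : x ++ u ++ y = t) :
    HasPeriod u p ↔ ∀ i, i + p < u.length → t[x.length + i]? = t[x.length + i + p]? := by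
  have hget : ∀ i, i < u.length → t[x.length + i]? = u[i]? := fun i hi => by
    rw [← h, List.append_assoc, List.getElem?_append_right (by omega), Nat.add_sub_cancel_left,
      List.getElem?_append_left hi]
  refine forall₂_congr fun i hi => ?_
  rw [hget i (by omega), add_assoc, hget (i + p) hi]

theorem HasPeriod.even_of_infix_mu {u w : List Bool} {p : ℕ} (hu : u <:+: mu w)
    (hper : HasPeriod u p) (hlen : 2 * p < u.length) : Even p := by
  obtain ⟨x, y, hxy⟩ := hu
  have hwin := (hasPeriod_iff_of_append_eq hxy).1 hper
  by_contra hnot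
  obtain ⟨q, rfl⟩ := Nat.not_even_iff_odd.1 hnot
  set f : ℕ → Option Bool := fun i => (mu w)[x.length + i]?
  -- An odd shift maps the boundary between two blocks `μ(b)` to the middle of a block,
  -- so any two neighbouring letters among the first `|u| - p` letters of `u` differ.
  have halt : ∀ i, i + 1 + (2 * q + 1) < u.length → f (i + 1) = (f i).map not := by
    intro i hi
    rcases Nat.even_or_odd (x.length + i) with heven | hodd
    · exact getElem?_mu_succ_of_even w heven
    · have hshift := getElem?_mu_succ_of_even w (hodd.add_odd (odd_two_mul_add_one q))
      simp only [f, ← add_assoc, hwin i (by omega), hwin (i + 1) hi]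
      rwa [add_right_comm] at hshift
  have hrepeat : ∀ i, i ≤ q → f (2 * i) = f 0 := by
    intro i hi
    induction i with
    | zero => rfl
    | succ i ih =>
      rw [show 2 * (i + 1) = 2 * i + 1 + 1 by ring, halt _ (by omega), halt _ (by omega),
        ih (by omega), Option.map_map, Function.comp_def]
      simp only [Bool.not_not, Option.map_id']
  have hflip : f (2 * q + 1) = (f 0).map not := by rw [halt _ (by omega), hrepeat q le_rfl]
  have hperiod : (mu w)[x.length]? = (mu w)[x.length]?.map not :=
    (hwin 0 (by omega)).trans hflip
  have hlt : x.length < (mu w).length := by rw [← hxy]; simp only [List.length_append]; omega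
  rw [List.getElem?_eq_getElem hlt] at hperiod
  simp at hperiod

theorem HasPeriod.exists_infix_of_infix_mu {u w : List Bool} {r : ℕ} (hu : u <:+: mu w)
    (hper : HasPeriod u (2 * r)) (hlen : 2 * r < u.length) :
    ∃ v, v <:+: w ∧ HasPeriod v r ∧ u.length ≤ 2 * v.length := by
  obtain ⟨x, y, hxy⟩ := hu
  have hwin := (hasPeriod_iff_of_append_eq hxy).1 hper
  have hfit : x.length + u.length ≤ 2 * w.length := by
    rw [← mu_length, ← hxy]; simp only [List.length_append]; omega
  -- `v` is the shortest factor of `w` whose image covers the occurrence of `u`.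
  set a := x.length / 2
  set b := (x.length + u.length + 1) / 2
  set v := (w.drop a).take (b - a)
  have hw : w.take a ++ v ++ (w.drop a).drop (b - a) = w := by simp [v]
  have ha : (w.take a).length = a := by rw [List.length_take]; omega
  have hv : v.length = b - a := by
    rw [List.length_take, List.length_drop]; omega
  refine ⟨v, ⟨_, _, hw⟩, ?_, by omega⟩
  rw [hasPeriod_iff_of_append_eq hw, ha, hv]
  intro i hi
  have hm := (getElem?_mu_eq_getElem?_add_two_mul_iff w _ r).1
    (hwin (2 * (a + i) - x.length) (by omega))
  rwa [show (x.length + (2 * (a + i) - x.length)) / 2 = a + i by omega] at hm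

theorem exists_infix_of_infix_mu_iterate {w u : List Bool} {p : ℕ} (s : ℕ)
    (hu : u <:+: mu^[s] w) (hper : HasPeriod u p) (hlen : 2 * p < u.length) :
    ∃ q, p = 2 ^ s * q ∧ ∃ v, v <:+: w ∧ HasPeriod v q ∧ u.length ≤ 2 ^ s * v.length := by
  induction s generalizing u p with
  | zero => exact ⟨p, by simp, u, hu, hper, by simp⟩
  | succ s ih =>
    rw [Function.iterate_succ_apply'] at hu
    obtain ⟨r, rfl⟩ := even_iff_two_dvd.1 (hper.even_of_infix_mu hu hlen)
    obtain ⟨v', hv'u, hv'per, hv'len⟩ := hper.exists_infix_of_infix_mu hu (by omega)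
    obtain ⟨q, rfl, v, hvw, hvper, hvlen⟩ := ih hv'u hv'per (by omega)
    exact ⟨q, by ring, v, hvw, hvper, by rw [pow_succ']; nlinarith⟩

theorem mu_iter_desubstitution_general (α : ℝ) (hα : 2 < α) (w : List Bool) (s : ℕ)
    (u : List Bool) (p : ℕ) (hu : u <:+: mu^[s] w)
    (hper : HasPeriod u p) (hexp : α ≤ (u.length : ℝ) / p) :
    2 ^ s ∣ p ∧ ∃ v : List Bool, v <:+: w ∧ HasPeriod v (p / 2 ^ s) ∧
      (u.length : ℝ) / p ≤ (v.length : ℝ) / (p / 2 ^ s : ℕ) := by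
  have hp : 0 < p := Nat.pos_of_ne_zero <| by
    rintro rfl
    simp only [Nat.cast_zero, div_zero] at hexp
    linarith
  have hlen : 2 * p < u.length := by
    have := (lt_div_iff₀ (by positivity : (0 : ℝ) < p)).1 (hα.trans_le hexp)
    exact_mod_cast this
  obtain ⟨q, rfl, v, hvw, hvper, hvlen⟩ := exists_infix_of_infix_mu_iterate s hu hper hlen
  rw [Nat.mul_div_cancel_left _ (by positivity)]
  refine ⟨dvd_mul_right _ _, v, hvw, hvper, ?_⟩
  calc (u.length : ℝ) / ↑(2 ^ s * q) = (u.length / 2 ^ s : ℝ) / q := by push_cast; ring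
    _ ≤ v.length / q := by
      gcongr
      rw [div_le_iff₀ (by positivity)]
      exact_mod_cast (by linarith : u.length ≤ v.length * 2 ^ s)

theorem mu_iter_desubstitution (α : ℝ) (hα : 2 < α) (w : List Bool) (s : ℕ)
    (u : List Bool) (p : ℕ) (hp : 0 < p) (hu : u <:+: mu^[s] w)
    (hper : HasPeriod u p) (hexp : α ≤ (u.length : ℝ) / p) :
    2 ^ s ∣ p ∧ ∃ v : List Bool, v <:+: w ∧ HasPeriod v (p / 2 ^ s) ∧
      (u.length : ℝ) / p ≤ (v.length : ℝ) / (p / 2 ^ s : ℕ) :=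
  mu_iter_desubstitution_general α hα w s u p hu hper hexp
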